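/- arXiv:2601.10626 — 4 statements merged into one kernel-verified Lean document; each statement's English description precedes it below -/
import Mathlib

section
/- Let g : [0,1] → [0,∞) be a function and let W be a random real symmetric positive semi-definite d×d matrix such that for every unit vector u ∈ R^d and every ξ ∈ [0,1], P(|u^T W u| > g(ξ)) ≤ ξ. Then for every ξ ∈ [0,1], P(‖W‖ > 2 g(ξ/9^d)) ≤ ξ. -/
/-!
Take a `1/4`-net `N` of the unit sphere of `ℝ^d` with at most `9^d` points: the balls of radius
`1/8` around the points of a maximal `1/4`-separated set are disjoint and lie in the ball of radius
`9/8`, so comparing volumes bounds its size by `9^d`. For symmetric `W` and a unit vector `v` within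
`1/4` of `u ∈ N`, `vᵀWv - uᵀWu = ⟪W (v - u), v + u⟫` has size at most `‖W‖ / 2`, hence
`‖W‖ ≤ 2 max_{u ∈ N} |uᵀWu|`. A union bound over `N` at level `ξ / 9^d` finishes.
-/

open MeasureTheory

/-- Operator (spectral) norm of a real `d × d` matrix, viewed as a linear map on
Euclidean space. -/
noncomputable def opNorm {d : ℕ} (A : Matrix (Fin d) (Fin d) ℝ) : ℝ :=
  ‖(Matrix.toEuclideanCLM (𝕜 := ℝ) A : EuclideanSpace ℝ (Fin d) →L[ℝ] EuclideanSpace ℝ (Fin d))‖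

open Metric Module
open scoped NNReal ENNReal RealInnerProductSpace

section Packing

variable {E : Type*} [NormedAddCommGroup E] [NormedSpace ℝ E] [FiniteDimensional ℝ E]

theorem Metric.IsSeparated.card_le_of_subset_closedBall {ε : ℝ≥0} (hε : 0 < ε) {C : Finset E}
    (hC : IsSeparated ε (C : Set E)) (hC1 : (C : Set E) ⊆ closedBall 0 1) :
    (C.card : ℝ) ≤ (1 + 2 / ε) ^ finrank ℝ E := by
  borelize E
  set μ : Measure E := Measure.addHaar
  set d := finrank ℝ E
  have hε' : (0 : ℝ) < ε := hε
  have hdisj : (C : Set E).PairwiseDisjoint fun x => ball x (ε / 2) := by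
    intro x hx y hy hxy
    refine ball_disjoint_ball ?_
    have : (ε : ℝ≥0∞) < edist x y := hC hx hy hxy
    rw [edist_dist, ← ENNReal.ofReal_coe_nnreal, ENNReal.ofReal_lt_ofReal_iff_of_nonneg
      ε.coe_nonneg] at this
    linarith
  have hsub : ⋃ x ∈ C, ball x (ε / 2) ⊆ ball (0 : E) (1 + ε / 2) := by
    refine Set.iUnion₂_subset fun x hx => ball_subset_ball' ?_
    have := hC1 hx
    rw [mem_closedBall] at this
    linarith
  have hvol : (C.card : ℝ≥0∞) * μ (ball 0 (ε / 2)) ≤ μ (ball 0 (1 + ε / 2)) := by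
    calc (C.card : ℝ≥0∞) * μ (ball 0 (ε / 2)) = ∑ x ∈ C, μ (ball x (ε / 2)) := by
          simp [Measure.addHaar_ball_center]
      _ = μ (⋃ x ∈ C, ball x (ε / 2)) :=
          (measure_biUnion_finset hdisj fun _ _ => measurableSet_ball).symm
      _ ≤ μ (ball 0 (1 + ε / 2)) := measure_mono hsub
  rw [Measure.addHaar_ball_of_pos μ 0 (r := ε / 2) (by positivity),
    Measure.addHaar_ball_of_pos μ 0 (r := 1 + ε / 2) (by positivity), ← mul_assoc,
    ENNReal.mul_le_mul_iff_left (measure_ball_pos μ 0 one_pos).ne' measure_ball_lt_top.ne,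
    ← ENNReal.ofReal_natCast, ← ENNReal.ofReal_mul (by positivity),
    ENNReal.ofReal_le_ofReal_iff (by positivity)] at hvol
  calc (C.card : ℝ) = C.card * (ε / 2) ^ d / (ε / 2) ^ d := by field_simp
    _ ≤ (1 + ε / 2) ^ d / (ε / 2) ^ d := by gcongr
    _ = (1 + 2 / ε) ^ d := by rw [← div_pow]; congr 1; field_simp; ring

theorem Metric.packingNumber_le_of_subset_closedBall {ε : ℝ≥0} (hε : 0 < ε) {A : Set E}
    (hA : A ⊆ closedBall 0 1) :
    packingNumber ε A ≤ ⌊(1 + 2 / (ε : ℝ)) ^ finrank ℝ E⌋₊ := by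
  refine iSup₂_le fun C hCA => iSup_le fun hC => ?_
  by_contra! hlt
  obtain ⟨t, htC, ht⟩ := Set.exists_subset_encard_eq (Order.add_one_le_of_lt hlt)
  have htfin : t.Finite := Set.finite_of_encard_eq_coe ht
  have hcard := IsSeparated.card_le_of_subset_closedBall hε (C := htfin.toFinset)
    (by simpa using hC.subset htC) (by simpa using htC.trans (hCA.trans hA))
  rw [htfin.encard_eq_coe_toFinset_card] at ht
  have : htfin.toFinset.card = ⌊(1 + 2 / (ε : ℝ)) ^ finrank ℝ E⌋₊ + 1 := by exact_mod_cast ht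
  rw [this, Nat.cast_add_one] at hcard
  exact (Nat.lt_floor_add_one _).not_ge hcard

theorem exists_finset_isCover_sphere {ε : ℝ≥0} (hε : 0 < ε) :
    ∃ N : Finset E, (N : Set E) ⊆ sphere 0 1 ∧ IsCover ε (sphere 0 1) (N : Set E) ∧
      (N.card : ℝ) ≤ (1 + 2 / ε) ^ finrank ℝ E := by
  have hpack := packingNumber_le_of_subset_closedBall (E := E) hε sphere_subset_closedBall
  have hfin : packingNumber ε (sphere (0 : E) 1) ≠ ⊤ := ne_top_of_le_ne_top (by simp) hpack
  have hN := encard_maximalSeparatedSet hfin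
  have hNfin := Set.finite_of_encard_le_coe (hN ▸ hpack)
  refine ⟨hNfin.toFinset, by simpa using maximalSeparatedSet_subset,
    by simpa using isCover_maximalSeparatedSet hfin, ?_⟩
  rw [hNfin.encard_eq_coe_toFinset_card] at hN
  have : hNfin.toFinset.card ≤ ⌊(1 + 2 / (ε : ℝ)) ^ finrank ℝ E⌋₊ := by exact_mod_cast hN ▸ hpack
  exact (Nat.cast_le.mpr this).trans (Nat.floor_le (by positivity))

end Packing

section QuadraticForm

variable {E : Type*} [NormedAddCommGroup E] [InnerProductSpace ℝ E] {T : E →L[ℝ] E}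

namespace ContinuousLinearMap

theorem norm_le_of_abs_inner_apply_self_le (hT : T.IsSymmetric) {c : ℝ} (hc : 0 ≤ c)
    (h : ∀ v ∈ sphere (0 : E) 1, |⟪T v, v⟫| ≤ c) : ‖T‖ ≤ c := by
  rw [T.norm_eq_iSup_rayleighQuotient hT]
  refine ciSup_le fun x => ?_
  rcases eq_or_ne x 0 with rfl | hx
  · simpa using hc
  have hv : ‖x‖⁻¹ • x ∈ sphere (0 : E) 1 := by
    simp [norm_smul, hx]
  rw [← T.rayleigh_smul x (inv_ne_zero (norm_ne_zero_iff.mpr hx))]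
  simpa [rayleighQuotient, reApplyInnerSelf_apply, mem_sphere_zero_iff_norm.mp hv] using h _ hv

theorem abs_inner_apply_self_le_of_isCover (hT : T.IsSymmetric) {ε : ℝ≥0} {N : Set E}
    (hNs : N ⊆ sphere 0 1) (hN : IsCover ε (sphere 0 1) N) {M : ℝ}
    (hM : ∀ u ∈ N, |⟪T u, u⟫| ≤ M) {v : E} (hv : v ∈ sphere (0 : E) 1) :
    |⟪T v, v⟫| ≤ M + 2 * ε * ‖T‖ := by
  obtain ⟨u, hu, hvu⟩ := hN.subset_iUnion_closedBall hv |> Set.mem_iUnion₂.mp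
  rw [mem_closedBall, dist_eq_norm] at hvu
  have hv1 : ‖v‖ = 1 := mem_sphere_zero_iff_norm.mp hv
  have hu1 : ‖u‖ = 1 := mem_sphere_zero_iff_norm.mp (hNs hu)
  have hdiff : ⟪T v, v⟫ - ⟪T u, u⟫ = ⟪T (v - u), v + u⟫ := by
    have hsym : ⟪T u, v⟫ = ⟪T v, u⟫ := by rw [← coe_coe, hT v u, real_inner_comm, coe_coe]
    simp only [map_sub, inner_sub_left, inner_add_right, hsym]
    ring
  have hbound : |⟪T (v - u), v + u⟫| ≤ ‖T‖ * ε * 2 :=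
    calc |⟪T (v - u), v + u⟫| ≤ ‖T (v - u)‖ * ‖v + u‖ := abs_real_inner_le_norm _ _
      _ ≤ (‖T‖ * ‖v - u‖) * (‖v‖ + ‖u‖) := by gcongr; exacts [T.le_opNorm _, norm_add_le _ _]
      _ ≤ ‖T‖ * ε * 2 := by rw [hv1, hu1]; gcongr; norm_num
  have := abs_sub_abs_le_abs_sub ⟪T v, v⟫ ⟪T u, u⟫
  rw [hdiff] at this
  linarith [hM u hu]

theorem norm_le_of_isCover (hT : T.IsSymmetric) {ε : ℝ≥0} (hε : ε < 1 / 2) {N : Set E}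
    (hNs : N ⊆ sphere 0 1) (hN : IsCover ε (sphere 0 1) N) {M : ℝ} (hM0 : 0 ≤ M)
    (hM : ∀ u ∈ N, |⟪T u, u⟫| ≤ M) : ‖T‖ ≤ M / (1 - 2 * ε) := by
  have hε' : (ε : ℝ) < 1 / 2 := by exact_mod_cast hε
  have := T.norm_le_of_abs_inner_apply_self_le hT (by positivity)
    fun v hv => T.abs_inner_apply_self_le_of_isCover hT hNs hN hM hv
  rw [le_div_iff₀ (by linarith)]
  linarith

end ContinuousLinearMap
end QuadraticForm

theorem Matrix.inner_toEuclideanCLM_apply_self {n : Type*} [Fintype n] [DecidableEq n]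
    (A : Matrix n n ℝ) (u : EuclideanSpace ℝ n) :
    ⟪Matrix.toEuclideanCLM (𝕜 := ℝ) A u, u⟫ = ∑ j, ∑ l, u j * A j l * u l := by
  rw [real_inner_comm, Matrix.inner_toEuclideanCLM]
  simp only [dotProduct, Matrix.mulVec, Finset.mul_sum, mul_assoc]

theorem Matrix.IsHermitian.isSymmetric_toEuclideanCLM {𝕜 n : Type*} [RCLike 𝕜] [Fintype n]
    [DecidableEq n] {A : Matrix n n 𝕜} (hA : A.IsHermitian) :
    (Matrix.toEuclideanCLM (𝕜 := 𝕜) A).IsSymmetric :=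
  Matrix.isSymmetric_toEuclideanLin_iff.mpr hA

theorem stmt_2_general {Ω : Type*} [MeasurableSpace Ω] (μ : Measure Ω) [IsProbabilityMeasure μ]
    {d : ℕ} (g : ℝ → ℝ) (hg : ∀ ξ ∈ Set.Icc (0 : ℝ) 1, 0 ≤ g ξ)
    (W : Ω → Matrix (Fin d) (Fin d) ℝ)
    (hpsd : ∀ ω, (W ω).PosSemidef)
    (h : ∀ u : Fin d → ℝ, (∑ j, (u j) ^ 2) = 1 → ∀ ξ ∈ Set.Icc (0 : ℝ) 1,
      μ {ω | g ξ < |∑ j, ∑ l, u j * W ω j l * u l|} ≤ ENNReal.ofReal ξ) :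
    ∀ ξ ∈ Set.Icc (0 : ℝ) 1,
      μ {ω | 2 * g (ξ / 9 ^ d) < opNorm (W ω)} ≤ ENNReal.ofReal ξ := by
  intro ξ ⟨hξ0, hξ1⟩
  set ξ' := ξ / 9 ^ d
  have hξ' : ξ' ∈ Set.Icc (0 : ℝ) 1 :=
    ⟨by positivity, div_le_one_of_le₀ (hξ1.trans (one_le_pow₀ (by norm_num))) (by positivity)⟩
  obtain ⟨N, hNs, hN, hcard⟩ :=
    exists_finset_isCover_sphere (E := EuclideanSpace ℝ (Fin d)) (ε := 1 / 4) (by norm_num)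
  have hunit : ∀ u ∈ N, ∑ j, (u j) ^ 2 = 1 := fun u hu => by
    rw [← EuclideanSpace.real_norm_sq_eq, mem_sphere_zero_iff_norm.mp (hNs hu), one_pow]
  have hcover : {ω | 2 * g ξ' < opNorm (W ω)} ⊆
      ⋃ u ∈ N, {ω | g ξ' < |∑ j, ∑ l, u j * W ω j l * u l|} := by
    intro ω hω
    by_contra hω'
    simp only [Set.mem_iUnion, Set.mem_ofPred_eq, not_exists, not_lt] at hω hω'
    have := (Matrix.toEuclideanCLM (𝕜 := ℝ) (W ω)).norm_le_of_isCover
      (hpsd ω).isHermitian.isSymmetric_toEuclideanCLM (by norm_num) hNs hN (hg ξ' hξ')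
      fun u hu => by rw [Matrix.inner_toEuclideanCLM_apply_self]; exact hω' u hu
    norm_num at this
    exact hω.not_ge (by unfold opNorm; linarith)
  calc μ {ω | 2 * g ξ' < opNorm (W ω)}
      ≤ ∑ u ∈ N, μ {ω | g ξ' < |∑ j, ∑ l, u j * W ω j l * u l|} :=
        (measure_mono hcover).trans (measure_biUnion_finset_le _ _)
    _ ≤ N.card • ENNReal.ofReal ξ' :=
        Finset.sum_le_card_nsmul _ _ _ fun u hu => h u (hunit u hu) ξ' hξ'
    _ ≤ ENNReal.ofReal ξ := by
        rw [nsmul_eq_mul, ← ENNReal.ofReal_natCast, ← ENNReal.ofReal_mul (by positivity)]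
        refine ENNReal.ofReal_le_ofReal ?_
        norm_num at hcard
        calc (N.card : ℝ) * ξ' ≤ 9 ^ d * ξ' := by gcongr
          _ = ξ := mul_div_cancel₀ ξ (by positivity)

/-- ε-net lifting of tail bounds for quadratic forms of a random symmetric positive
semi-definite matrix: if `P(|uᵀWu| > g(ξ)) ≤ ξ` for every unit vector `u` and every
`ξ ∈ [0,1]`, then `P(‖W‖ > 2 g(ξ/9^d)) ≤ ξ`. -/
theorem stmt_2 {Ω : Type*} [MeasurableSpace Ω] (μ : Measure Ω) [IsProbabilityMeasure μ]
    {d : ℕ} (g : ℝ → ℝ) (hg : ∀ ξ ∈ Set.Icc (0 : ℝ) 1, 0 ≤ g ξ)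
    (W : Ω → Matrix (Fin d) (Fin d) ℝ) (hW : ∀ j l, Measurable fun ω => W ω j l)
    (hpsd : ∀ ω, (W ω).PosSemidef)
    (h : ∀ u : Fin d → ℝ, (∑ j, (u j) ^ 2) = 1 → ∀ ξ ∈ Set.Icc (0 : ℝ) 1,
      μ {ω | g ξ < |∑ j, ∑ l, u j * W ω j l * u l|} ≤ ENNReal.ofReal ξ) :
    ∀ ξ ∈ Set.Icc (0 : ℝ) 1,
      μ {ω | 2 * g (ξ / 9 ^ d) < opNorm (W ω)} ≤ ENNReal.ofReal ξ :=
  stmt_2_general μ g hg W hpsd h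
end

section
/- Let D_1, …, D_n and D_1', …, D_n' be points in R^d such that D_i = D_i' for all i ≥ 2. Fix m̂ ∈ R^d, a radius ρ > 0, and an integer L ≥ 1. Define S = {i ∈ {1,…,n} : ‖D_i − m̂‖ < ρ}, S' = {i ∈ {1,…,n} : ‖D_i' − m̂‖ < ρ}, n_S = max(|S|, L) and n_{S'} = max(|S'|, L). Then ‖(1/n_S) Σ_{i∈S}(D_i − m̂) − (1/n_{S'}) Σ_{i∈S'}(D_i' − m̂)‖ ≤ 2ρ/L. -/
open scoped Classical

/-!
Let `T` be the set of kept users other than user `1`; it is the same for both datasets, and so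
is the sum over it. If user `1` is kept in both, the two statistics share the normaliser
`max(|T| + 1, L)` and differ only through user `1`'s two vectors, each of norm `≤ ρ`. If user
`1` is kept in only one, going from `T` to `insert 1 T` adds one vector of norm `≤ ρ` and
changes the normaliser from `b = max(|T|, L)` to `a = max(|T| + 1, L) ≤ b + 1`; the rescaling
of the old sum costs at most `(1/b - 1/a) |T| ρ ≤ ρ / a`, so the total change is again
`≤ 2ρ/a ≤ 2ρ/L`.
-/

open Finset

variable {ι E : Type*} [NormedAddCommGroup E] [NormedSpace ℝ E]

noncomputable def trimmedMean (L : ℝ) (s : Finset ι) (v : ι → E) : E :=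
  (max (#s : ℝ) L)⁻¹ • ∑ i ∈ s, v i

lemma trimmedMean_congr {L : ℝ} {s : Finset ι} {v w : ι → E} (h : ∀ i ∈ s, v i = w i) :
    trimmedMean L s v = trimmedMean L s w := by
  rw [trimmedMean, trimmedMean, sum_congr rfl h]

lemma norm_inv_smul_add_sub_inv_smul_le {a b c ρ : ℝ} {x s : E} (hb : 0 < b) (hba : b ≤ a)
    (hab : a ≤ b + 1) (hcb : c ≤ b) (hx : ‖x‖ ≤ ρ) (hs : ‖s‖ ≤ c * ρ) :
    ‖a⁻¹ • (x + s) - b⁻¹ • s‖ ≤ 2 * ρ / a := by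
  have ha : 0 < a := hb.trans_le hba
  have hρ : 0 ≤ ρ := (norm_nonneg x).trans hx
  have hinv : a⁻¹ ≤ b⁻¹ := inv_anti₀ hb hba
  have hrescale : (b⁻¹ - a⁻¹) * (c * ρ) ≤ a⁻¹ * ρ := by
    rw [inv_sub_inv hb.ne' ha.ne']
    have : (a - b) * c ≤ b := by nlinarith
    rw [div_mul_eq_mul_div, div_le_iff₀ (by positivity)]
    have hlhs : a⁻¹ * ρ * (b * a) = b * ρ := by field_simp
    rw [hlhs, ← mul_assoc]
    exact mul_le_mul_of_nonneg_right this hρ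
  calc ‖a⁻¹ • (x + s) - b⁻¹ • s‖ = ‖a⁻¹ • x - (b⁻¹ - a⁻¹) • s‖ := by
        rw [smul_add, sub_smul, sub_sub_eq_add_sub, add_sub_assoc]
    _ ≤ a⁻¹ * ‖x‖ + (b⁻¹ - a⁻¹) * ‖s‖ := by
        refine (norm_sub_le _ _).trans_eq ?_
        rw [norm_smul, norm_smul, Real.norm_of_nonneg (by positivity),
          Real.norm_of_nonneg (sub_nonneg.2 hinv)]
    _ ≤ a⁻¹ * ρ + (b⁻¹ - a⁻¹) * (c * ρ) := by gcongr
    _ ≤ 2 * ρ / a := by rw [div_eq_mul_inv]; linarith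

lemma norm_trimmedMean_insert_sub_le [DecidableEq ι] {L ρ : ℝ} {s : Finset ι} {a : ι}
    {v : ι → E} (hL : 0 < L) (ha : a ∉ s) (hv : ∀ i ∈ insert a s, ‖v i‖ ≤ ρ) :
    ‖trimmedMean L (insert a s) v - trimmedMean L s v‖ ≤ 2 * ρ / L := by
  have hva := hv a (mem_insert_self a s)
  have hρ : 0 ≤ ρ := (norm_nonneg _).trans hva
  have hsum : ‖∑ i ∈ s, v i‖ ≤ #s * ρ := by
    simpa using norm_sum_le_of_le s fun i hi => hv i (mem_insert_of_mem hi)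
  rw [trimmedMean, trimmedMean, card_insert_of_notMem ha, sum_insert ha, Nat.cast_succ]
  have hmono : max (#s : ℝ) L ≤ max (#s + 1 : ℝ) L := by gcongr; linarith
  have hstep : max (#s + 1 : ℝ) L ≤ max (#s : ℝ) L + 1 :=
    max_le (by gcongr; exact le_max_left _ _) (by linarith [le_max_right (#s : ℝ) L])
  calc _ ≤ 2 * ρ / max (#s + 1 : ℝ) L :=
        norm_inv_smul_add_sub_inv_smul_le (lt_max_of_lt_right hL) hmono hstep (le_max_left _ _)
          hva hsum
    _ ≤ 2 * ρ / L := div_le_div_of_nonneg_left (by positivity) hL (le_max_right _ _)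

lemma norm_trimmedMean_insert_sub_insert_le [DecidableEq ι] {L ρ : ℝ} {s : Finset ι} {a : ι}
    {v w : ι → E} (hL : 0 < L) (ha : a ∉ s) (hvw : ∀ i ∈ s, v i = w i)
    (hva : ‖v a‖ ≤ ρ) (hwa : ‖w a‖ ≤ ρ) :
    ‖trimmedMean L (insert a s) v - trimmedMean L (insert a s) w‖ ≤ 2 * ρ / L := by
  have hρ : 0 ≤ ρ := (norm_nonneg _).trans hva
  rw [trimmedMean, trimmedMean, ← smul_sub, sum_insert ha, sum_insert ha, sum_congr rfl hvw,
    add_sub_add_right_eq_sub, norm_smul, Real.norm_of_nonneg (by positivity), ← div_eq_inv_mul]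
  exact div_le_div₀ (by positivity) ((norm_sub_le _ _).trans (by linarith)) hL (le_max_right _ _)

lemma norm_trimmedMean_sub_le_of_erase_eq [DecidableEq ι] {L ρ : ℝ} {s t : Finset ι} {a : ι}
    {v w : ι → E} (hL : 0 < L) (hρ : 0 ≤ ρ) (hst : s.erase a = t.erase a)
    (hvw : ∀ i ∈ s.erase a, v i = w i) (hv : ∀ i ∈ s, ‖v i‖ ≤ ρ)
    (hw : ∀ i ∈ t, ‖w i‖ ≤ ρ) :
    ‖trimmedMean L s v - trimmedMean L t w‖ ≤ 2 * ρ / L := by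
  set T := s.erase a
  have haT : a ∉ T := notMem_erase a s
  have hT : trimmedMean L T v = trimmedMean L T w := trimmedMean_congr hvw
  by_cases has : a ∈ s <;> by_cases hat : a ∈ t
  · have hs : s = insert a T := (insert_erase has).symm
    have ht : t = insert a T := by rw [hst, insert_erase hat]
    rw [hs, ht]
    exact norm_trimmedMean_insert_sub_insert_le hL haT hvw (hv a has) (hw a hat)
  · have hs : s = insert a T := (insert_erase has).symm
    have ht : t = T := by rw [hst, erase_eq_of_notMem hat]
    rw [ht, ← hT, hs]
    exact norm_trimmedMean_insert_sub_le hL haT (hs ▸ hv)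
  · have hs : s = T := (erase_eq_of_notMem has).symm
    have ht : t = insert a T := by rw [hst, insert_erase hat]
    rw [norm_sub_rev, hs, hT, ht]
    exact norm_trimmedMean_insert_sub_le hL haT (ht ▸ hw)
  · have hs : s = T := (erase_eq_of_notMem has).symm
    have ht : t = T := by rw [hst, erase_eq_of_notMem hat]
    rw [hs, ht, hT, sub_self, norm_zero]
    positivity

/-- User-level global sensitivity of the trimmed, recentered mean statistic:
changing the data of a single user (user `1`) changes the statistic by at most
`2ρ/L` in Euclidean norm. -/
theorem stmt_16 {d : ℕ} (n : ℕ) (D D' : ℕ → EuclideanSpace ℝ (Fin d))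
    (hDD' : ∀ i, 2 ≤ i → D i = D' i)
    (mhat : EuclideanSpace ℝ (Fin d)) (ρ : ℝ) (hρ : 0 < ρ) (L : ℕ) (hL : 1 ≤ L) :
    ‖(max ((Finset.Icc 1 n).filter fun i => ‖D i - mhat‖ < ρ).card L : ℝ)⁻¹ •
        (∑ i ∈ (Finset.Icc 1 n).filter fun i => ‖D i - mhat‖ < ρ, (D i - mhat)) -
      (max ((Finset.Icc 1 n).filter fun i => ‖D' i - mhat‖ < ρ).card L : ℝ)⁻¹ •
        (∑ i ∈ (Finset.Icc 1 n).filter fun i => ‖D' i - mhat‖ < ρ, (D' i - mhat))‖ ≤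
      2 * ρ / L := by
  have hother : ∀ i ∈ (Icc 1 n).erase 1, D i = D' i := fun i hi => by
    rw [mem_erase, mem_Icc] at hi
    exact hDD' i (by omega)
  have hkept : ∀ {x : ℕ → EuclideanSpace ℝ (Fin d)},
      ∀ i ∈ (Icc 1 n).filter fun i => ‖x i - mhat‖ < ρ, ‖x i - mhat‖ ≤ ρ :=
    fun i hi => (mem_filter.1 hi).2.le
  refine norm_trimmedMean_sub_le_of_erase_eq (a := 1) (v := fun i => D i - mhat)
    (w := fun i => D' i - mhat) (by exact_mod_cast hL) hρ.le ?_ ?_ hkept hkept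
  · rw [← filter_erase, ← filter_erase]
    exact filter_congr fun i hi => by rw [hother i hi]
  · intro i hi
    rw [← filter_erase] at hi
    rw [hother i (mem_filter.1 hi).1]
end

section
/- Let β_1, …, β_n and β_1', …, β_n' be points in R^d such that β_i = β_i' for all i ≥ 2. Fix m̂, b ∈ R^d, a radius ρ > 0 and an integer L ≥ 1, and set κ = ρ + ‖b − m̂‖. Define S = {i ∈ {1,…,n} : ‖β_i − m̂‖ ≤ ρ}, S' = {i ∈ {1,…,n} : ‖β_i' − m̂‖ ≤ ρ}, n_S = max(|S|, L) and n_{S'} = max(|S'|, L). Then ‖(1/n_S²) Σ_{i∈S}(β_i − b)(β_i − b)^T − (1/n_{S'}²) Σ_{i∈S'}(β_i' − b)(β_i' − b)^T‖_F ≤ 4κ²/L², where ‖·‖_F denotes the Frobenius norm on d×d matrices. -/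
open scoped Classical

/-- Frobenius norm of a real `d × d` matrix. -/
noncomputable def frobNorm {d : ℕ} (M : Matrix (Fin d) (Fin d) ℝ) : ℝ :=
  Real.sqrt (∑ j, ∑ l, (M j l) ^ 2)

/-!
Away from user `1` the two trimmed index sets coincide, say with common part `T`, so the
difference of the statistics is `(N⁻² - N'⁻²) ∑_{i ∈ T} vᵢvᵢᵀ` plus at most one outer product
from each side, scaled by `N⁻²` resp. `N'⁻²`. Every outer product that occurs has Frobenius norm
at most `κ²`, because `‖βᵢ - b‖ ≤ ‖βᵢ - m̂‖ + ‖b - m̂‖ ≤ κ`. Since `N, N' ≥ L`, `|N - N'| ≤ 1`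
and `#T ≤ min N N'`, one has `|N⁻² - N'⁻²| · #T ≤ 2 / (N N') ≤ 2 / L²`, and the two single
outer products contribute at most `2κ²/L²`.
-/

open Finset

attribute [local instance] Matrix.frobeniusNormedAddCommGroup Matrix.frobeniusNormedSpace

lemma frobNorm_eq_norm {d : ℕ} (M : Matrix (Fin d) (Fin d) ℝ) : frobNorm M = ‖M‖ := by
  rw [frobNorm, Matrix.frobenius_norm_def, Real.sqrt_eq_rpow]
  simp only [Real.norm_eq_abs, Real.rpow_two, sq_abs]

lemma Matrix.frobenius_norm_vecMulVec_le {m n : Type*} [Fintype m] [Fintype n] (v : m → ℝ)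
    (w : n → ℝ) : ‖Matrix.vecMulVec v w‖ ≤ ‖WithLp.toLp 2 v‖ * ‖WithLp.toLp 2 w‖ := by
  rw [Matrix.vecMulVec_eq Unit, ← Matrix.frobenius_norm_replicateCol (ι := Unit),
    ← Matrix.frobenius_norm_replicateRow (ι := Unit)]
  exact Matrix.frobenius_norm_mul _ _

lemma inv_sq_sub_inv_sq_mul_le {x y t l : ℝ} (hl : 0 < l) (hlx : l ≤ x) (hxy : x ≤ y)
    (hyx : y ≤ x + 1) (ht : t ≤ x) : ((x ^ 2)⁻¹ - (y ^ 2)⁻¹) * t ≤ 2 / l ^ 2 := by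
  have hx : 0 < x := hl.trans_le hlx
  have hy : 0 < y := hx.trans_le hxy
  calc ((x ^ 2)⁻¹ - (y ^ 2)⁻¹) * t ≤ ((x ^ 2)⁻¹ - (y ^ 2)⁻¹) * x := by
        gcongr
        exact sub_nonneg.2 (by gcongr)
    _ = (y - x) * (y + x) / (x * y ^ 2) := by field_simp; ring
    _ ≤ 1 * (y + y) / (x * y ^ 2) := by gcongr; all_goals linarith
    _ = 2 / (x * y) := by field_simp; ring
    _ ≤ 2 / l ^ 2 := by gcongr; nlinarith

lemma abs_inv_sq_sub_inv_sq_mul_le {x y t l : ℝ} (hl : 0 < l) (hlx : l ≤ x) (hly : l ≤ y)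
    (hxy : |x - y| ≤ 1) (htx : t ≤ x) (hty : t ≤ y) :
    |(x ^ 2)⁻¹ - (y ^ 2)⁻¹| * t ≤ 2 / l ^ 2 := by
  obtain ⟨hxy₁, hxy₂⟩ := abs_sub_le_iff.1 hxy
  have hx : 0 < x := hl.trans_le hlx
  have hy : 0 < y := hl.trans_le hly
  rcases le_total x y with h | h
  · rw [abs_of_nonneg (sub_nonneg.2 (by gcongr))]
    exact inv_sq_sub_inv_sq_mul_le hl hlx h (by linarith) htx
  · rw [abs_sub_comm, abs_of_nonneg (sub_nonneg.2 (by gcongr))]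
    exact inv_sq_sub_inv_sq_mul_le hl hly h (by linarith) hty

lemma smul_sum_sub_smul_sum_eq {R E ι : Type*} [Ring R] [AddCommGroup E] [Module R E]
    [DecidableEq ι] {s s' : Finset ι} {f f' : ι → E} (c c' : R) (a : ι)
    (hss' : s.erase a = s'.erase a)
    (hff' : ∀ i ∈ s.erase a, f i = f' i) :
    c • ∑ i ∈ s, f i - c' • ∑ i ∈ s', f' i =
      (c - c') • ∑ i ∈ s.erase a, f i + (c • (∑ i ∈ s, f i - ∑ i ∈ s.erase a, f i) -
        c' • (∑ i ∈ s', f' i - ∑ i ∈ s'.erase a, f' i)) := by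
  rw [← hss', ← sum_congr rfl hff']
  simp only [smul_sub, sub_smul]
  abel

lemma abs_max_card_sub_max_card_le_one {ι : Type*} [DecidableEq ι] {s s' : Finset ι} (a : ι)
    (L : ℕ) (hss' : s.erase a = s'.erase a) : |max (#s : ℝ) L - max (#s' : ℝ) L| ≤ 1 := by
  have hs := pred_card_le_card_erase (s := s) (a := a)
  have hs' := pred_card_le_card_erase (s := s') (a := a)
  have ht := card_erase_le (s := s) (a := a)
  have ht' := card_erase_le (s := s') (a := a)
  rw [hss'] at hs ht
  refine (abs_max_sub_max_le_abs _ _ _).trans (abs_sub_le_iff.2 ⟨?_, ?_⟩)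
  all_goals
    rw [sub_le_iff_le_add]
    exact_mod_cast (by omega)

section NormedSpace

variable {E ι : Type*} [SeminormedAddCommGroup E] [DecidableEq ι]

lemma norm_sum_sub_sum_erase_le {s : Finset ι} {f : ι → E} {K : ℝ} (a : ι) (hK : 0 ≤ K)
    (hf : ∀ i ∈ s, ‖f i‖ ≤ K) : ‖∑ i ∈ s, f i - ∑ i ∈ s.erase a, f i‖ ≤ K := by
  by_cases ha : a ∈ s
  · rw [← add_sum_erase s f ha, add_sub_cancel_right]
    exact hf a ha
  · rwa [erase_eq_of_notMem ha, sub_self, norm_zero]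

theorem norm_inv_sq_smul_sum_sub_inv_sq_smul_sum_le [NormedSpace ℝ E] {s s' : Finset ι}
    {f f' : ι → E} {K : ℝ} {L : ℕ} (a : ι) (hL : 1 ≤ L) (hK : 0 ≤ K)
    (hss' : s.erase a = s'.erase a) (hff' : ∀ i ∈ s.erase a, f i = f' i)
    (hf : ∀ i ∈ s, ‖f i‖ ≤ K) (hf' : ∀ i ∈ s', ‖f' i‖ ≤ K) :
    ‖((max (#s : ℝ) L) ^ 2)⁻¹ • ∑ i ∈ s, f i - ((max (#s' : ℝ) L) ^ 2)⁻¹ • ∑ i ∈ s', f' i‖ ≤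
      4 * K / L ^ 2 := by
  have hts : #(s.erase a) ≤ #s := card_erase_le
  have hts' : #(s.erase a) ≤ #s' := hss' ▸ card_erase_le
  have hNN' := abs_max_card_sub_max_card_le_one a L hss'
  rw [smul_sum_sub_smul_sum_eq _ _ a hss' hff']
  set t := s.erase a
  set N := max (#s : ℝ) L
  set N' := max (#s' : ℝ) L
  have hL0 : (0 : ℝ) < L := by exact_mod_cast hL
  have hLN : (L : ℝ) ≤ N := le_max_right _ _
  have hLN' : (L : ℝ) ≤ N' := le_max_right _ _
  have htN : (#t : ℝ) ≤ N := le_max_of_le_left (by exact_mod_cast hts)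
  have htN' : (#t : ℝ) ≤ N' := le_max_of_le_left (by exact_mod_cast hts')
  have hsum : ‖∑ i ∈ t, f i‖ ≤ #t * K := by
    simpa using norm_sum_le_of_le t fun i hi => hf i (mem_of_mem_erase hi)
  calc
    _ ≤ |(N ^ 2)⁻¹ - (N' ^ 2)⁻¹| * (#t * K) + ((N ^ 2)⁻¹ * K + (N' ^ 2)⁻¹ * K) := by
      refine (norm_add_le _ _).trans (add_le_add ?_ ((norm_sub_le _ _).trans (add_le_add ?_ ?_)))
      all_goals
        rw [norm_smul, Real.norm_eq_abs]
      · gcongr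
      · rw [abs_of_nonneg (by positivity)]
        gcongr
        exact norm_sum_sub_sum_erase_le a hK hf
      · rw [abs_of_nonneg (by positivity)]
        gcongr
        exact norm_sum_sub_sum_erase_le a hK hf'
    _ = (|(N ^ 2)⁻¹ - (N' ^ 2)⁻¹| * #t + ((N ^ 2)⁻¹ + (N' ^ 2)⁻¹)) * K := by ring
    _ ≤ (2 / L ^ 2 + (1 / L ^ 2 + 1 / L ^ 2)) * K := by
      gcongr
      · exact abs_inv_sq_sub_inv_sq_mul_le hL0 hLN hLN' hNN' htN htN'
      all_goals rw [one_div]; gcongr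
    _ = 4 * K / L ^ 2 := by ring

end NormedSpace

lemma Matrix.of_mul_sum_eq_smul_sum_vecMulVec {d : ℕ} {ι : Type*} (c : ℝ) (s : Finset ι)
    (β : ι → EuclideanSpace ℝ (Fin d)) (b : EuclideanSpace ℝ (Fin d)) :
    Matrix.of (fun j l => c * ∑ i ∈ s, (β i j - b j) * (β i l - b l)) =
      c • ∑ i ∈ s, Matrix.vecMulVec ⇑(β i - b) ⇑(β i - b) := by
  ext j l
  simp [Matrix.sum_apply, Finset.mul_sum, Matrix.vecMulVec_apply]

lemma norm_vecMulVec_sub_le {d : ℕ} {x mhat b : EuclideanSpace ℝ (Fin d)} {ρ : ℝ}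
    (hx : ‖x - mhat‖ ≤ ρ) : ‖Matrix.vecMulVec ⇑(x - b) ⇑(x - b)‖ ≤ (ρ + ‖b - mhat‖) ^ 2 := by
  have hxb : ‖x - b‖ ≤ ρ + ‖b - mhat‖ := by
    calc ‖x - b‖ ≤ ‖x - mhat‖ + ‖mhat - b‖ := norm_sub_le_norm_sub_add_norm_sub _ _ _
      _ ≤ ρ + ‖b - mhat‖ := by rw [norm_sub_rev mhat]; gcongr
  calc _ ≤ ‖x - b‖ * ‖x - b‖ := Matrix.frobenius_norm_vecMulVec_le _ _
    _ ≤ (ρ + ‖b - mhat‖) ^ 2 := by rw [← sq]; gcongr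

theorem stmt_17_general {d : ℕ} (n : ℕ) (β β' : ℕ → EuclideanSpace ℝ (Fin d))
    (hββ' : ∀ i, 2 ≤ i → β i = β' i)
    (mhat b : EuclideanSpace ℝ (Fin d)) (ρ : ℝ) (L : ℕ) (hL : 1 ≤ L) :
    frobNorm
      ((Matrix.of fun j l =>
          ((max ((Finset.Icc 1 n).filter fun i => ‖β i - mhat‖ ≤ ρ).card L : ℝ) ^ 2)⁻¹ *
            ∑ i ∈ (Finset.Icc 1 n).filter fun i => ‖β i - mhat‖ ≤ ρ,
              (β i j - b j) * (β i l - b l)) -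
        Matrix.of fun j l =>
          ((max ((Finset.Icc 1 n).filter fun i => ‖β' i - mhat‖ ≤ ρ).card L : ℝ) ^ 2)⁻¹ *
            ∑ i ∈ (Finset.Icc 1 n).filter fun i => ‖β' i - mhat‖ ≤ ρ,
              (β' i j - b j) * (β' i l - b l)) ≤
      4 * (ρ + ‖b - mhat‖) ^ 2 / L ^ 2 := by
  have hββ'_erase : ∀ i ∈ (Icc 1 n).erase 1, β i = β' i := fun i hi => by
    obtain ⟨hi1, hi⟩ := mem_erase.1 hi
    exact hββ' i (by have := (mem_Icc.1 hi).1; omega)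
  have herase : ((Icc 1 n).filter fun i => ‖β i - mhat‖ ≤ ρ).erase 1 =
      ((Icc 1 n).filter fun i => ‖β' i - mhat‖ ≤ ρ).erase 1 := by
    simp only [← filter_erase]
    exact filter_congr fun i hi => by rw [hββ'_erase i hi]
  rw [Matrix.of_mul_sum_eq_smul_sum_vecMulVec, Matrix.of_mul_sum_eq_smul_sum_vecMulVec,
    frobNorm_eq_norm]
  refine norm_inv_sq_smul_sum_sub_inv_sq_smul_sum_le 1 hL (sq_nonneg _) herase ?_
    (fun i hi => norm_vecMulVec_sub_le (mem_filter.1 hi).2)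
    (fun i hi => norm_vecMulVec_sub_le (mem_filter.1 hi).2)
  intro i hi
  rw [← filter_erase] at hi
  rw [hββ'_erase i (mem_of_mem_filter i hi)]

/-- User-level global sensitivity of the trimmed sample covariance statistic:
changing the data of a single user (user `1`) changes the statistic by at most
`4κ²/L²` in Frobenius norm, where `κ = ρ + ‖b − m̂‖`. -/
theorem stmt_17 {d : ℕ} (n : ℕ) (β β' : ℕ → EuclideanSpace ℝ (Fin d))
    (hββ' : ∀ i, 2 ≤ i → β i = β' i)
    (mhat b : EuclideanSpace ℝ (Fin d)) (ρ : ℝ) (hρ : 0 < ρ) (L : ℕ) (hL : 1 ≤ L) :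
    frobNorm
      ((Matrix.of fun j l =>
          ((max ((Finset.Icc 1 n).filter fun i => ‖β i - mhat‖ ≤ ρ).card L : ℝ) ^ 2)⁻¹ *
            ∑ i ∈ (Finset.Icc 1 n).filter fun i => ‖β i - mhat‖ ≤ ρ,
              (β i j - b j) * (β i l - b l)) -
        Matrix.of fun j l =>
          ((max ((Finset.Icc 1 n).filter fun i => ‖β' i - mhat‖ ≤ ρ).card L : ℝ) ^ 2)⁻¹ *
            ∑ i ∈ (Finset.Icc 1 n).filter fun i => ‖β' i - mhat‖ ≤ ρ,
              (β' i j - b j) * (β' i l - b l)) ≤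
      4 * (ρ + ‖b - mhat‖) ^ 2 / L ^ 2 :=
  stmt_17_general n β β' hββ' mhat b ρ L hL
end

section
/- Let D_1, …, D_n be points in R^d, let m, v ∈ R^d, and let K ≥ 0 be such that max_{1≤i≤n} ‖D_i − m‖ ≤ K. Let D̄ = n^{-1} Σ_{i=1}^n D_i. Then for every nonempty subset S ⊆ {1,…,n}, ‖|S|^{-1} Σ_{i∈S} D_i − v‖ ≤ ‖D̄ − v‖ + 2K (n − |S|)/|S|. -/
/-!
Subtracting the centre `m`, the `S`-average differs from the full average by
`t⁻¹ • ((t - s) / s • ∑_{S} (Dᵢ - m) - ∑_{T \ S} (Dᵢ - m))`, where `s = |S|`, `t = |T|`.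
Each of the two sums has norm at most `(t - s) K` after scaling, so the averages are within
`2K(t - s)/t ≤ 2K(t - s)/s` of each other, and the triangle inequality through `D̄` concludes.
-/

open Finset

section TrimmedAverage

variable {ι E : Type*} [SeminormedAddCommGroup E]

theorem norm_sum_sub_le_card_mul {s : Finset ι} {D : ι → E} {m : E} {K : ℝ}
    (hD : ∀ i ∈ s, ‖D i - m‖ ≤ K) : ‖∑ i ∈ s, (D i - m)‖ ≤ #s * K :=
  (norm_sum_le_of_le s hD).trans_eq (by simp)

variable [NormedSpace ℝ E] [DecidableEq ι]

theorem average_sub_average_eq {S T : Finset ι} (hST : S ⊆ T) (hS : S.Nonempty)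
    (D : ι → E) (m : E) :
    (#S : ℝ)⁻¹ • ∑ i ∈ S, D i - (#T : ℝ)⁻¹ • ∑ i ∈ T, D i =
      (#T : ℝ)⁻¹ • ((((#T : ℝ) - #S) / #S) • ∑ i ∈ S, (D i - m) -
        ∑ i ∈ T \ S, (D i - m)) := by
  have hs : (#S : ℝ) ≠ 0 := by exact_mod_cast hS.card_ne_zero
  have ht : (#T : ℝ) ≠ 0 := by exact_mod_cast (hS.mono hST).card_ne_zero
  simp only [sum_sub_distrib, sum_const, ← Nat.cast_smul_eq_nsmul ℝ, cast_card_sdiff hST,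
    ← sum_sdiff hST (f := D)]
  match_scalars <;> field_simp
  ring

theorem norm_average_sub_average_le {S T : Finset ι} (hST : S ⊆ T) (hS : S.Nonempty)
    {D : ι → E} {m : E} {K : ℝ} (hD : ∀ i ∈ T, ‖D i - m‖ ≤ K) :
    ‖(#S : ℝ)⁻¹ • ∑ i ∈ S, D i - (#T : ℝ)⁻¹ • ∑ i ∈ T, D i‖ ≤
      2 * K * ((#T : ℝ) - #S) / #T := by
  have hs : (0 : ℝ) < #S := by exact_mod_cast hS.card_pos
  have hst : (#S : ℝ) ≤ #T := by exact_mod_cast card_le_card hST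
  have hin := norm_sum_sub_le_card_mul (s := S) fun i hi ↦ hD i (hST hi)
  have hout := norm_sum_sub_le_card_mul (s := T \ S) fun i hi ↦ hD i (sdiff_subset hi)
  rw [cast_card_sdiff hST] at hout
  rw [average_sub_average_eq hST hS D m, norm_smul, Real.norm_of_nonneg (by positivity)]
  calc (#T : ℝ)⁻¹ * ‖(((#T : ℝ) - #S) / #S) • ∑ i ∈ S, (D i - m) - ∑ i ∈ T \ S, (D i - m)‖
      ≤ (#T : ℝ)⁻¹ * (((#T : ℝ) - #S) / #S * (#S * K) + (#T - #S) * K) := by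
        gcongr
        refine (norm_sub_le _ _).trans (add_le_add ?_ hout)
        rw [norm_smul, Real.norm_of_nonneg (div_nonneg (by linarith) hs.le)]
        gcongr
    _ = 2 * K * ((#T : ℝ) - #S) / #T := by field_simp; ring

end TrimmedAverage

theorem stmt_19_general {d : ℕ} (n : ℕ) (D : ℕ → EuclideanSpace ℝ (Fin d))
    (m v : EuclideanSpace ℝ (Fin d)) (K : ℝ)
    (hbound : ∀ i ∈ Finset.Icc 1 n, ‖D i - m‖ ≤ K)
    (S : Finset ℕ) (hS : S ⊆ Finset.Icc 1 n) (hSne : S.Nonempty) :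
    ‖(S.card : ℝ)⁻¹ • (∑ i ∈ S, D i) - v‖ ≤
      ‖(n : ℝ)⁻¹ • (∑ i ∈ Finset.Icc 1 n, D i) - v‖ +
        2 * K * ((n : ℝ) - S.card) / S.card := by
  have hK : 0 ≤ K := (norm_nonneg _).trans (hbound _ (hS hSne.choose_spec))
  have hsn : (S.card : ℝ) ≤ n := by
    exact_mod_cast (card_le_card hS).trans_eq (Nat.card_Icc 1 n)
  have hclose := norm_average_sub_average_le hS hSne hbound
  rw [Nat.card_Icc, Nat.add_sub_cancel] at hclose
  calc ‖(S.card : ℝ)⁻¹ • (∑ i ∈ S, D i) - v‖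
      ≤ ‖(S.card : ℝ)⁻¹ • (∑ i ∈ S, D i) - (n : ℝ)⁻¹ • (∑ i ∈ Finset.Icc 1 n, D i)‖ +
          ‖(n : ℝ)⁻¹ • (∑ i ∈ Finset.Icc 1 n, D i) - v‖ := norm_sub_le_norm_sub_add_norm_sub _ _ _
    _ ≤ 2 * K * ((n : ℝ) - S.card) / n + ‖(n : ℝ)⁻¹ • (∑ i ∈ Finset.Icc 1 n, D i) - v‖ := by
        gcongr
    _ ≤ 2 * K * ((n : ℝ) - S.card) / S.card +
          ‖(n : ℝ)⁻¹ • (∑ i ∈ Finset.Icc 1 n, D i) - v‖ := by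
        gcongr
    _ = _ := add_comm _ _

/-- Deterministic control of a trimmed average: if all points lie within distance `K`
of `m`, then for any nonempty subset `S` of `{1,…,n}`, the `S`-average is within
`‖D̄ - v‖ + 2K(n - |S|)/|S|` of any vector `v`. -/
theorem stmt_19 {d : ℕ} (n : ℕ) (D : ℕ → EuclideanSpace ℝ (Fin d))
    (m v : EuclideanSpace ℝ (Fin d)) (K : ℝ) (hK : 0 ≤ K)
    (hbound : ∀ i ∈ Finset.Icc 1 n, ‖D i - m‖ ≤ K)
    (S : Finset ℕ) (hS : S ⊆ Finset.Icc 1 n) (hSne : S.Nonempty) :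
    ‖(S.card : ℝ)⁻¹ • (∑ i ∈ S, D i) - v‖ ≤
      ‖(n : ℝ)⁻¹ • (∑ i ∈ Finset.Icc 1 n, D i) - v‖ +
        2 * K * ((n : ℝ) - S.card) / S.card :=
  stmt_19_general n D m v K hbound S hS hSne
end
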